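/- Riccati-type existence argument: suppose the subwronskian σ̂ > 0 on (a,∞) and the function k = τ̂'/σ̂ satisfies k' = -p - k²/r with ∫ₐ^∞ p = +∞ and r > 0. Then k(x) → -∞ as x → +∞; in particular τ̂' has a zero in (a,∞), so the first systems-focal point μ̂₁(a) exists. -/

import Mathlib

open Set Filter MeasureTheory intervalIntegral

/-- `T4 r q y = (r y'')' - q y'`. -/
noncomputable def T4 (r q y : ℝ → ℝ) : ℝ → ℝ :=
  fun x => deriv (fun s => r s * deriv (deriv y) s) x - q x * deriv y x

/-- `y` solves `(r y'')'' - (q y')' = p y`, written as `(Ty)' = p y`. -/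
def IsSol4 (r p q y : ℝ → ℝ) : Prop :=
  ∀ x, deriv (T4 r q y) x = p x * y x

/-- `σ̂ = u v' - v u'`. -/
noncomputable def sigmaHat (u v : ℝ → ℝ) : ℝ → ℝ :=
  fun x => u x * deriv v x - v x * deriv u x

/-- `τ̂ = u ⬝ Tv - v ⬝ Tu`. -/
noncomputable def tauHat (r q u v : ℝ → ℝ) : ℝ → ℝ :=
  fun x => u x * T4 r q v x - v x * T4 r q u x

/-- `ρ̂ = u₁ ⬝ Tv - v₁ ⬝ Tu` where `y₁ = r y''`. -/
noncomputable def rhoHat (r q u v : ℝ → ℝ) : ℝ → ℝ :=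
  fun x => (r x * deriv (deriv u) x) * T4 r q v x - (r x * deriv (deriv v) x) * T4 r q u x

/-- Initial conditions of the fundamental solutions `u`, `v`:
`u(a) = u₁(a) = Tu(a) = 0`, `u'(a) = 1`, and `v(a) = v'(a) = v₁(a) = 0`, `Tv(a) = 1`. -/
def FundIC (r q : ℝ → ℝ) (a : ℝ) (u v : ℝ → ℝ) : Prop :=
  u a = 0 ∧ r a * deriv (deriv u) a = 0 ∧ T4 r q u a = 0 ∧ deriv u a = 1 ∧
  v a = 0 ∧ deriv v a = 0 ∧ r a * deriv (deriv v) a = 0 ∧ T4 r q v a = 1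

/-!
Since `r > 0`, the Riccati equation gives `k' ≤ -p`, so `k + ∫ₐ p` is antitone and `k → -∞`.
On the other hand `τ̂ = u Tv - v Tu` has derivative `u'(a) Tv(a) - v'(a) Tu(a) = 1` at `a`
(because `u(a) = v(a) = 0`, this needs only the continuity of `Tu`, `Tv`), so `τ̂` increases
somewhere to the right of `a`, and the mean value inequality yields `c > a` with `τ̂'(c) ≥ 0`,
i.e. `k(c) ≥ 0`. As `k` is continuous and tends to `-∞`, it vanishes beyond `c`, and there
`τ̂' = k σ̂ = 0`.
-/

theorem tendsto_atBot_of_hasDerivAt_le_neg {k k' p : ℝ → ℝ} {a : ℝ} (hp : Continuous p)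
    (hk : ∀ x > a, HasDerivAt k (k' x) x) (hk' : ∀ x > a, k' x ≤ -p x)
    (hpint : Tendsto (fun b => ∫ x in a..b, p x) atTop atTop) :
    Tendsto k atTop atBot := by
  set g : ℝ → ℝ := fun x => k x + ∫ t in a..x, p t
  have hg : ∀ x > a, HasDerivAt g (k' x + p x) x := fun x hx =>
    (hk x hx).add (hp.integral_hasStrictDerivAt a x).hasDerivAt
  have hanti : AntitoneOn g (Ioi a) := by
    refine antitoneOn_of_hasDerivWithinAt_nonpos (f' := fun x => k' x + p x) (convex_Ioi a)
      (fun x hx => (hg x hx).continuousAt.continuousWithinAt) (fun x hx => ?_) (fun x hx => ?_)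
    · rw [interior_Ioi] at hx ⊢
      exact (hg x hx).hasDerivWithinAt
    · rw [interior_Ioi] at hx
      linarith [hk' x hx]
  have hbound : ∀ b ≥ a + 1, k b ≤ g (a + 1) - ∫ t in a..b, p t := fun b hb => by
    have := hanti (show a < a + 1 by linarith) (show a < b by linarith) hb
    simp only [g] at this ⊢
    linarith
  refine tendsto_atBot_mono' atTop ?_ (tendsto_atBot_add_const_left atTop (g (a + 1))
    (tendsto_neg_atTop_atBot.comp hpint))
  filter_upwards [eventually_ge_atTop (a + 1)] with b hb using hbound b hb

theorem HasDerivAt.mul_of_eq_zero {𝕜 : Type*} [NontriviallyNormedField 𝕜] {f g : 𝕜 → 𝕜}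
    {f' a : 𝕜} (hf : HasDerivAt f f' a) (hfa : f a = 0) (hg : ContinuousAt g a) :
    HasDerivAt (fun x => f x * g x) (f' * g a) a := by
  rw [hasDerivAt_iff_tendsto_slope] at hf ⊢
  refine (hf.mul (hg.tendsto.mono_left nhdsWithin_le_nhds)).congr fun x => ?_
  simp only [slope_def_field, hfa]
  ring

theorem HasDerivAt.exists_gt_of_pos {f : ℝ → ℝ} {f' a : ℝ} (hf : HasDerivAt f f' a)
    (hf' : 0 < f') : ∃ b > a, f a < f b := by
  have hslope := (hasDerivAt_iff_tendsto_slope.1 hf).mono_left (nhdsGT_le_nhdsNE a)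
  obtain ⟨b, hb, hpos⟩ :=
    (eventually_mem_nhdsWithin.and (hslope.eventually (eventually_gt_nhds hf'))).exists
  exact ⟨b, hb, (slope_pos_iff_of_le hb.le).1 hpos⟩

theorem exists_deriv_nonneg_of_le {f : ℝ → ℝ} {a b : ℝ} (hab : a < b)
    (hf : ContinuousOn f (Icc a b)) (hle : f a ≤ f b) : ∃ c ∈ Ioo a b, 0 ≤ deriv f c := by
  by_contra! hneg
  have hanti := strictAntiOn_of_deriv_neg (convex_Icc a b) hf (by rwa [interior_Icc])
  exact (hanti (left_mem_Icc.2 hab.le) (right_mem_Icc.2 hab.le) hab).not_ge hle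

theorem exists_eq_zero_of_tendsto_atBot {k : ℝ → ℝ} {c : ℝ} (hk : ContinuousOn k (Ici c))
    (hc : 0 ≤ k c) (hlim : Tendsto k atTop atBot) : ∃ e ≥ c, k e = 0 := by
  obtain ⟨d, hcd, hd⟩ :=
    ((eventually_ge_atTop c).and (hlim.eventually (eventually_lt_atBot 0))).exists
  obtain ⟨e, he, hke⟩ :=
    intermediate_value_Icc' hcd (hk.mono Icc_subset_Ici_self) ⟨hd.le, hc⟩
  exact ⟨e, he.1, hke⟩

theorem continuous_T4 {r q y : ℝ → ℝ} (hq : Continuous q) (hy : ContDiff ℝ 1 y)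
    (hry : ContDiff ℝ 1 (fun x => r x * deriv (deriv y) x)) : Continuous (T4 r q y) :=
  (hry.continuous_deriv le_rfl).sub (hq.mul (hy.continuous_deriv le_rfl))

theorem continuous_tauHat {r q u v : ℝ → ℝ} (hq : Continuous q)
    (hu : ContDiff ℝ 1 u) (hv : ContDiff ℝ 1 v)
    (hru : ContDiff ℝ 1 (fun x => r x * deriv (deriv u) x))
    (hrv : ContDiff ℝ 1 (fun x => r x * deriv (deriv v) x)) : Continuous (tauHat r q u v) :=
  (hu.continuous.mul (continuous_T4 hq hv hrv)).sub (hv.continuous.mul (continuous_T4 hq hu hru))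

theorem hasDerivAt_tauHat_of_fundIC {r q u v : ℝ → ℝ} {a : ℝ} (hq : Continuous q)
    (hu : ContDiff ℝ 1 u) (hv : ContDiff ℝ 1 v)
    (hru : ContDiff ℝ 1 (fun x => r x * deriv (deriv u) x))
    (hrv : ContDiff ℝ 1 (fun x => r x * deriv (deriv v) x)) (hic : FundIC r q a u v) :
    HasDerivAt (tauHat r q u v) 1 a := by
  obtain ⟨hua, -, -, hu'a, hva, hv'a, -, hTva⟩ := hic
  have hdu := (hu.differentiable one_ne_zero a).hasDerivAt
  have hdv := (hv.differentiable one_ne_zero a).hasDerivAt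
  have := (hdu.mul_of_eq_zero hua (continuous_T4 hq hv hrv).continuousAt).sub
    (hdv.mul_of_eq_zero hva (continuous_T4 hq hu hru).continuousAt)
  rwa [hu'a, hv'a, hTva, one_mul, zero_mul, sub_zero] at this

theorem riccati_focal_existence_general
    (a : ℝ) (r p q u v : ℝ → ℝ)
    (hpc : Continuous p) (hqc : Continuous q)
    (hrpos : ∀ x ∈ Ici a, 0 < r x)
    (hu : ContDiff ℝ 4 u) (hv : ContDiff ℝ 4 v)
    (hru : ContDiff ℝ 2 (fun x => r x * deriv (deriv u) x))
    (hrv : ContDiff ℝ 2 (fun x => r x * deriv (deriv v) x))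
    (hic : FundIC r q a u v)
    (hσ : ∀ x > a, 0 < sigmaHat u v x)
    (hk : ∀ x > a,
      HasDerivAt (fun s => deriv (tauHat r q u v) s / sigmaHat u v s)
        (-p x - (deriv (tauHat r q u v) x / sigmaHat u v x) ^ 2 / r x) x)
    (hpint : Tendsto (fun b => ∫ x in a..b, p x) atTop atTop) :
    Tendsto (fun x => deriv (tauHat r q u v) x / sigmaHat u v x) atTop atBot ∧
    ∃ x > a, deriv (tauHat r q u v) x = 0 := by
  set τ := tauHat r q u v
  set k := fun x => deriv τ x / sigmaHat u v x
  have hlim : Tendsto k atTop atBot := tendsto_atBot_of_hasDerivAt_le_neg hpc hk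
    (fun x hx => sub_le_self _ (div_nonneg (sq_nonneg _) (hrpos x hx.le).le)) hpint
  refine ⟨hlim, ?_⟩
  have hu1 : ContDiff ℝ 1 u := hu.of_le (by norm_num)
  have hv1 : ContDiff ℝ 1 v := hv.of_le (by norm_num)
  have hru1 := hru.of_le one_le_two
  have hrv1 := hrv.of_le one_le_two
  obtain ⟨b, hab, hτb⟩ :=
    (hasDerivAt_tauHat_of_fundIC hqc hu1 hv1 hru1 hrv1 hic).exists_gt_of_pos one_pos
  obtain ⟨c, hc, hτ'c⟩ :=
    exists_deriv_nonneg_of_le hab (continuous_tauHat hqc hu1 hv1 hru1 hrv1).continuousOn hτb.le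
  obtain ⟨e, hce, hke⟩ := exists_eq_zero_of_tendsto_atBot
    (fun x hx => (hk x (hc.1.trans_le hx)).continuousAt.continuousWithinAt)
    (div_nonneg hτ'c (hσ c hc.1).le) hlim
  have hea : a < e := hc.1.trans_le hce
  exact ⟨e, hea, (div_eq_zero_iff.1 hke).resolve_right (hσ e hea).ne'⟩

/-- Riccati-type existence argument: if `σ̂ > 0` on `(a, ∞)` and `k = τ̂'/σ̂` satisfies
`k' = -p - k²/r`, with `∫ₐ^∞ p = +∞`, then `k(x) → -∞` as `x → +∞`; in particular
`τ̂'` has a zero in `(a, ∞)`, i.e. the first systems-focal point `μ̂₁(a)` exists. -/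
theorem riccati_focal_existence
    (a : ℝ) (r p q u v : ℝ → ℝ)
    (hrc : Continuous r) (hpc : Continuous p) (hqc : Continuous q)
    (hrpos : ∀ x ∈ Ici a, 0 < r x) (hppos : ∀ x ∈ Ici a, 0 < p x)
    (hu : ContDiff ℝ 4 u) (hv : ContDiff ℝ 4 v)
    (hru : ContDiff ℝ 2 (fun x => r x * deriv (deriv u) x))
    (hrv : ContDiff ℝ 2 (fun x => r x * deriv (deriv v) x))
    (husol : IsSol4 r p q u) (hvsol : IsSol4 r p q v)
    (hic : FundIC r q a u v)
    (hσ : ∀ x > a, 0 < sigmaHat u v x)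
    (hk : ∀ x > a,
      HasDerivAt (fun s => deriv (tauHat r q u v) s / sigmaHat u v s)
        (-p x - (deriv (tauHat r q u v) x / sigmaHat u v x) ^ 2 / r x) x)
    (hpint : Tendsto (fun b => ∫ x in a..b, p x) atTop atTop) :
    Tendsto (fun x => deriv (tauHat r q u v) x / sigmaHat u v x) atTop atBot ∧
    ∃ x > a, deriv (tauHat r q u v) x = 0 :=
  riccati_focal_existence_general a r p q u v hpc hqc hrpos hu hv hru hrv hic hσ hk hpint
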